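/- The formal power series G(x) = Σ_{n≥0} av_{t73}(n) x^n (with integer or rational coefficients) satisfies the functional equation x·G(x)^4 + x·G(x)^2 − G(x) + x = 0. -/

import Mathlib

inductive TTree : Type
  | L : TTree
  | N : TTree → TTree → TTree → TTree

namespace TTree

/-- `occursAtRoot t T` : the pattern `t` occurs at the root of `T`. -/
def occursAtRoot : TTree → TTree → Prop
  | .L, _ => True
  | .N _ _ _, .L => False
  | .N p q r, .N a b c => occursAtRoot p a ∧ occursAtRoot q b ∧ occursAtRoot r c

/-- `contains t T` : the pattern `t` occurs at some vertex of `T`. -/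
def contains (t : TTree) : TTree → Prop
  | .L => occursAtRoot t .L
  | .N a b c => occursAtRoot t (.N a b c) ∨ contains t a ∨ contains t b ∨ contains t c

/-- `T.avoids t` : the tree `T` avoids the pattern `t`. -/
def avoids (T t : TTree) : Prop := ¬ contains t T

/-- the number of leaves of a ternary tree -/
def leaves : TTree → ℕ
  | .L => 1
  | .N a b c => leaves a + leaves b + leaves c

end TTree

/-- `av t n` : the number of `n`-leaf ternary trees avoiding the pattern `t` -/
noncomputable def av (t : TTree) (n : ℕ) : ℕ :=
  Set.ncard {T : TTree | T.leaves = n ∧ T.avoids t}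

/-- the 7-leaf pattern `t73 = N(N(N(L,L,L),L,L),L,L)` -/
def t73 : TTree := .N (.N (.N .L .L .L) .L .L) .L .L


/-! The pattern `t73` occurs at a vertex exactly when its left child and its left-left grandchild
are both internal. Hence a `t73`-avoiding tree is either a leaf, or `N a b c` with `b`, `c`
avoiding and `a` either a leaf or `N L b₁ c₁` with `b₁`, `c₁` avoiding. Counting leaves gives
`G = x (1 + G² + G⁴)`. -/

open Finset PowerSeries

section GradedPairs

variable {α β : Type*} [DecidableEq α] [DecidableEq β]

def gradedPairs (f : ℕ → Finset α) (g : ℕ → Finset β) (n : ℕ) : Finset (α × β) :=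
  (antidiagonal n).biUnion fun p => f p.1 ×ˢ g p.2

variable {f : ℕ → Finset α} {g : ℕ → Finset β} {u : α → ℕ} {v : β → ℕ}

theorem mem_gradedPairs (hf : ∀ i, ∀ a ∈ f i, u a = i) (hg : ∀ j, ∀ b ∈ g j, v b = j)
    {n : ℕ} {x : α × β} :
    x ∈ gradedPairs f g n ↔ x.1 ∈ f (u x.1) ∧ x.2 ∈ g (v x.2) ∧ u x.1 + v x.2 = n := by
  simp only [gradedPairs, mem_biUnion, mem_product, HasAntidiagonal.mem_antidiagonal,
    Prod.exists]
  constructor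
  · rintro ⟨i, j, rfl, ha, hb⟩
    rw [hf i _ ha, hg j _ hb]
    exact ⟨ha, hb, rfl⟩
  · rintro ⟨ha, hb, rfl⟩
    exact ⟨_, _, rfl, ha, hb⟩

theorem card_gradedPairs (hf : ∀ i, ∀ a ∈ f i, u a = i) (n : ℕ) :
    #(gradedPairs f g n) = ∑ p ∈ antidiagonal n, #(f p.1) * #(g p.2) := by
  rw [gradedPairs, card_biUnion]
  · simp only [card_product]
  · rintro ⟨i, j⟩ hp ⟨k, l⟩ hq hne
    rw [mem_coe, HasAntidiagonal.mem_antidiagonal] at hp hq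
    simp only [Function.onFun, disjoint_left, mem_product]
    rintro ⟨a, b⟩ ⟨ha, -⟩ ⟨ha', -⟩
    have : i = k := (hf i a ha).symm.trans (hf k a ha')
    exact hne (by simp only [Prod.mk.injEq]; omega)

theorem mk_card_mul_mk_card {R : Type*} [CommSemiring R] (hf : ∀ i, ∀ a ∈ f i, u a = i) :
    mk (fun n => (#(f n) : R)) * mk (fun n => (#(g n) : R))
      = mk fun n => (#(gradedPairs f g n) : R) := by
  ext n
  simp [coeff_mul, card_gradedPairs hf]

end GradedPairs

deriving instance DecidableEq for TTree

namespace TTree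

theorem one_le_leaves (T : TTree) : 1 ≤ T.leaves := by
  induction T <;> simp only [leaves] <;> omega

def withLeavesLE : ℕ → Finset TTree
  | 0 => ∅
  | n + 1 => insert L ((withLeavesLE n ×ˢ withLeavesLE n ×ˢ withLeavesLE n).image
      fun p => N p.1 p.2.1 p.2.2)

theorem mem_withLeavesLE {T : TTree} {n : ℕ} (h : T.leaves ≤ n) : T ∈ withLeavesLE n := by
  induction T generalizing n with
  | L =>
    obtain ⟨m, rfl⟩ : ∃ m, n = m + 1 := ⟨n - 1, by simp only [leaves] at h; omega⟩
    simp [withLeavesLE]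
  | N a b c iha ihb ihc =>
    have := a.one_le_leaves; have := b.one_le_leaves; have := c.one_le_leaves
    simp only [leaves] at h
    obtain ⟨m, rfl⟩ : ∃ m, n = m + 1 := ⟨n - 1, by omega⟩
    simp only [withLeavesLE, mem_insert, mem_image, mem_product]
    exact Or.inr ⟨(a, b, c), ⟨iha (by omega), ihb (by omega), ihc (by omega)⟩, rfl⟩

open scoped Classical in
noncomputable def avoiders (t : TTree) (n : ℕ) : Finset TTree :=
  {T ∈ withLeavesLE n | T.leaves = n ∧ T.avoids t}

theorem mem_avoiders {t T : TTree} {n : ℕ} : T ∈ avoiders t n ↔ T.leaves = n ∧ T.avoids t := by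
  simp only [avoiders, mem_filter, and_iff_right_iff_imp]
  exact fun h => mem_withLeavesLE h.1.le

theorem leaves_eq_of_mem_avoiders {t : TTree} : ∀ n, ∀ T ∈ avoiders t n, T.leaves = n :=
  fun _ _ h => (mem_avoiders.mp h).1

theorem av_eq_card_avoiders (t : TTree) (n : ℕ) : av t n = #(avoiders t n) := by
  rw [av, ← Set.ncard_coe_finset]
  congr
  ext T
  simp [mem_avoiders]

theorem avoiders_zero (t : TTree) : avoiders t 0 = ∅ := by
  ext T
  simp only [mem_avoiders, notMem_empty, iff_false, not_and]
  exact fun h => absurd h (Nat.one_le_iff_ne_zero.mp T.one_le_leaves)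

theorem mem_gradedPairs_avoiders {t : TTree} {n : ℕ} {x : TTree × TTree} :
    x ∈ gradedPairs (avoiders t) (avoiders t) n ↔
      x.1.avoids t ∧ x.2.avoids t ∧ x.1.leaves + x.2.leaves = n := by
  simp [mem_gradedPairs leaves_eq_of_mem_avoiders leaves_eq_of_mem_avoiders, mem_avoiders]

theorem leaves_add_leaves_eq_of_mem_gradedPairs_avoiders {t : TTree} :
    ∀ n, ∀ x ∈ gradedPairs (avoiders t) (avoiders t) n, x.1.leaves + x.2.leaves = n :=
  fun _ _ h => (mem_gradedPairs_avoiders.mp h).2.2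

theorem mem_gradedPairs_gradedPairs_avoiders {t : TTree} {n : ℕ}
    {x : (TTree × TTree) × (TTree × TTree)} :
    x ∈ gradedPairs (gradedPairs (avoiders t) (avoiders t))
        (gradedPairs (avoiders t) (avoiders t)) n ↔
      x.1.1.avoids t ∧ x.1.2.avoids t ∧ x.2.1.avoids t ∧ x.2.2.avoids t ∧
        x.1.1.leaves + x.1.2.leaves + (x.2.1.leaves + x.2.2.leaves) = n := by
  simp only [mem_gradedPairs leaves_add_leaves_eq_of_mem_gradedPairs_avoiders
    leaves_add_leaves_eq_of_mem_gradedPairs_avoiders, mem_gradedPairs_avoiders]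
  tauto

theorem N_avoids_iff {t a b c : TTree} :
    (N a b c).avoids t ↔ ¬ occursAtRoot t (N a b c) ∧ a.avoids t ∧ b.avoids t ∧ c.avoids t := by
  simp only [avoids, contains]
  tauto

theorem occursAtRoot_t73_iff {a b c : TTree} :
    occursAtRoot t73 (N a b c) ↔ ∃ x y z b₁ c₁, a = N (N x y z) b₁ c₁ := by
  rcases a with _ | ⟨_ | ⟨x, y, z⟩, b₁, c₁⟩ <;> simp [t73, occursAtRoot]

theorem L_avoids_t73 : L.avoids t73 := by
  simp [avoids, contains, occursAtRoot, t73]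

theorem N_avoids_t73_iff {a b c : TTree} :
    (N a b c).avoids t73 ↔
      (a = L ∨ ∃ b₁ c₁, a = N L b₁ c₁ ∧ b₁.avoids t73 ∧ c₁.avoids t73) ∧
        b.avoids t73 ∧ c.avoids t73 := by
  rw [N_avoids_iff, occursAtRoot_t73_iff]
  rcases a with _ | ⟨_ | ⟨x, y, z⟩, b₁, c₁⟩
  · simp [L_avoids_t73]
  · simp [N_avoids_iff, occursAtRoot_t73_iff, L_avoids_t73]
  · simp

def assembleT73Avoider : Unit ⊕ (TTree × TTree) ⊕ ((TTree × TTree) × (TTree × TTree)) → TTree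
  | .inl _ => L
  | .inr (.inl (b, c)) => N L b c
  | .inr (.inr ((b₁, c₁), (b, c))) => N (N L b₁ c₁) b c

theorem assembleT73Avoider_injective : Function.Injective assembleT73Avoider := by
  rintro (_ | ⟨b, c⟩ | ⟨⟨b₁, c₁⟩, b, c⟩) (_ | ⟨b', c'⟩ | ⟨⟨b₁', c₁'⟩, b', c'⟩) h <;>
    simp_all [assembleT73Avoider]

noncomputable def t73AvoiderParts (n : ℕ) :
    Finset (Unit ⊕ (TTree × TTree) ⊕ ((TTree × TTree) × (TTree × TTree))) :=
  (if n = 0 then {()} else ∅ : Finset Unit).disjSum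
    ((gradedPairs (avoiders t73) (avoiders t73) n).disjSum
      (gradedPairs (gradedPairs (avoiders t73) (avoiders t73))
        (gradedPairs (avoiders t73) (avoiders t73)) n))

theorem mapsTo_assembleT73Avoider (n : ℕ) :
    Set.MapsTo assembleT73Avoider (t73AvoiderParts n) (avoiders t73 (n + 1)) := by
  rintro (_ | ⟨b, c⟩ | ⟨⟨b₁, c₁⟩, b, c⟩) hx <;>
    simp [t73AvoiderParts, mem_gradedPairs_avoiders, mem_gradedPairs_gradedPairs_avoiders] at hx
  · split_ifs at hx with hn
    · simp [mem_avoiders, hn, assembleT73Avoider, leaves, L_avoids_t73]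
    · simp at hx
  all_goals
    simp [mem_avoiders, assembleT73Avoider, leaves, N_avoids_t73_iff, hx]
    omega

theorem surjOn_assembleT73Avoider (n : ℕ) :
    Set.SurjOn assembleT73Avoider (t73AvoiderParts n) (avoiders t73 (n + 1)) := by
  rintro (_ | ⟨a, b, c⟩) hT <;> rw [mem_coe, mem_avoiders] at hT
  · refine ⟨.inl (), ?_, rfl⟩
    have hn : n = 0 := by simp only [leaves] at hT; omega
    simp [t73AvoiderParts, hn]
  · obtain ⟨hl, ha | ⟨b₁, c₁, rfl, hb₁, hc₁⟩, hb, hc⟩ := And.imp_right N_avoids_t73_iff.mp hT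
    · subst ha
      simp only [leaves] at hl
      refine ⟨.inr (.inl (b, c)), ?_, rfl⟩
      simp [t73AvoiderParts, mem_gradedPairs_avoiders, hb, hc]
      omega
    · simp only [leaves] at hl
      refine ⟨.inr (.inr ((b₁, c₁), (b, c))), ?_, rfl⟩
      simp [t73AvoiderParts, mem_gradedPairs_gradedPairs_avoiders, hb₁, hc₁, hb, hc]
      omega

theorem card_avoiders_t73_succ (n : ℕ) :
    #(avoiders t73 (n + 1)) = (if n = 0 then 1 else 0) +
      #(gradedPairs (avoiders t73) (avoiders t73) n) +
      #(gradedPairs (gradedPairs (avoiders t73) (avoiders t73))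
        (gradedPairs (avoiders t73) (avoiders t73)) n) := by
  calc #(avoiders t73 (n + 1)) = #(t73AvoiderParts n) :=
        (card_nbij _ (mapsTo_assembleT73Avoider n) assembleT73Avoider_injective.injOn
          (surjOn_assembleT73Avoider n)).symm
    _ = _ := by
      simp only [t73AvoiderParts, card_disjSum, apply_ite card, card_singleton, card_empty,
        add_assoc]

theorem mk_card_avoiders_t73_eq_X_mul {R : Type*} [CommSemiring R] {G : R⟦X⟧}
    (hG : G = mk fun n => (#(avoiders t73 n) : R)) : G = X * (1 + G ^ 2 + G ^ 4) := by
  have hG2 : G ^ 2 = mk fun n => (#(gradedPairs (avoiders t73) (avoiders t73) n) : R) := by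
    rw [sq, hG, mk_card_mul_mk_card leaves_eq_of_mem_avoiders]
  have hG4 : G ^ 4 = mk fun n => (#(gradedPairs (gradedPairs (avoiders t73) (avoiders t73))
      (gradedPairs (avoiders t73) (avoiders t73)) n) : R) := by
    rw [show G ^ 4 = G ^ 2 * G ^ 2 by ring, hG2,
      mk_card_mul_mk_card leaves_add_leaves_eq_of_mem_gradedPairs_avoiders]
  ext (_ | n)
  · simp [hG, avoiders_zero]
  · rw [coeff_succ_X_mul, hG2, hG4, hG, coeff_mk, card_avoiders_t73_succ]
    by_cases hn : n = 0 <;> simp [hn, coeff_one]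

end TTree

open PowerSeries in
/-- The generating function `G(x) = Σ av_{t73}(n) xⁿ` satisfies
`x·G(x)⁴ + x·G(x)² − G(x) + x = 0`. -/
theorem av_t73_gf :
    let G : PowerSeries ℚ := PowerSeries.mk fun n => (av t73 n : ℚ)
    X * G ^ 4 + X * G ^ 2 - G + X = 0 := by
  intro G
  have hG : G = X * (1 + G ^ 2 + G ^ 4) :=
    TTree.mk_card_avoiders_t73_eq_X_mul (by simp only [G, TTree.av_eq_card_avoiders])
  linear_combination -hG
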